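/- Let r ≥ 1 be an integer and d > 0 a real number. For each squarefree integer q ≥ 1 let Ψ_q : ℤ^r → ℂ be a function with |Ψ_q| ≤ 1 that factors through ℤ^r → (ℤ/qℤ)^r, with normalized finite Fourier transform Ψ̂_q, and let φ : ℝ^r → ℂ be a Schwartz function with Fourier transform φ̂. Define E(X,q) := X^{r/d} · ∑_{0 ≠ x ∈ ℤ^r} Ψ̂_q(x)·φ̂(x·X^{1/d}/q). Suppose there are α > 0, c < r/d, η > 0 and a constant C₁ such that for all X ≥ 2 and all real N with 1 ≤ N ≤ X^α, setting Z := 2N·X^{η−1/d}, one has X^{r/d} · ∑_{q squarefree, N ≤ q ≤ 2N} ∑ |Ψ̂_q(x)| ≤ C₁·X^c, the inner sum over nonzero x ∈ ℤ^r with |x_i| ≤ Z for every coordinate i. Then there exist c' < r/d and a constant C₂ such that ∑_{q < X^α, q squarefree} |E(X,q)| ≤ C₂·X^{c'} for all X ≥ 2. -/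

import Mathlib

/-!
Split each error term `E(X, q)` at the box `|x_i| ≤ Z = 2N X^{η - 1/d}`, with `N = 2^⌊log₂ q⌋`
so that `N ≤ q < 2N`. Inside the box `|φ̂|` is bounded, and grouping the `q < X^α` into the
`O(log X) = O(X^ε)` dyadic blocks `[N, 2N]`, the hypothesis bounds the box part by `X^{c + ε}`.
Outside the box the frequency `y = x X^{1/d} / q` has `‖y‖ ≥ X^η` and `‖y‖ ≥ ‖x‖ X^{1/d} / q`, so
the decay `|φ̂(y)| ≪ ‖y‖^{-(k + r + 1)}` makes the tail `O(X^{-ηk})` times a power of `X` that does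
not depend on `k`; for `k` large it is `O(X^{c + ε})` even after summing over `q`.
-/

open scoped Classical

/-- The normalized finite Fourier transform of a function `Ψ : ℤ^r → ℂ` that factors
through the reduction map `ℤ^r → (ℤ/qℤ)^r`:
`Ψ̂(w) = q^{-r} ∑_{v ∈ (ℤ/qℤ)^r} Ψ(v) exp(2πi⟨v,w⟩/q)`. -/
noncomputable def fourierZ (r q : ℕ) (Ψ : (Fin r → ℤ) → ℂ) (w : Fin r → ℤ) : ℂ :=
  (q : ℂ) ^ (-(r : ℤ)) *
    ∑ v ∈ Fintype.piFinset (fun _ : Fin r => Finset.range q),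
      Ψ (fun i => (v i : ℤ)) *
        Complex.exp (2 * Real.pi * Complex.I * (∑ i, (v i : ℂ) * (w i : ℂ)) / q)

open FourierTransform

theorem norm_fourierZ_le_one {r q : ℕ} {Ψ : (Fin r → ℤ) → ℂ} (hΨ : ∀ x, ‖Ψ x‖ ≤ 1)
    (w : Fin r → ℤ) : ‖fourierZ r q Ψ w‖ ≤ 1 := by
  have hterm : ∀ v : Fin r → ℕ, ‖Ψ (fun i => (v i : ℤ)) *
      Complex.exp (2 * Real.pi * Complex.I * (∑ i, (v i : ℂ) * (w i : ℂ)) / q)‖ ≤ 1 := by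
    intro v
    have harg : 2 * Real.pi * Complex.I * (∑ i, (v i : ℂ) * (w i : ℂ)) / q =
        ((2 * Real.pi * (∑ i, (v i : ℝ) * (w i : ℝ)) / q : ℝ) : ℂ) * Complex.I := by
      push_cast; ring
    rw [norm_mul, harg, Complex.norm_exp_ofReal_mul_I, mul_one]
    exact hΨ _
  calc ‖fourierZ r q Ψ w‖ ≤ ((q : ℝ) ^ r)⁻¹ * ((q ^ r : ℕ) : ℝ) := by
        rw [fourierZ, norm_mul, norm_zpow, Complex.norm_natCast, zpow_neg, zpow_natCast]
        gcongr
        refine (norm_sum_le _ _).trans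
          ((Finset.sum_le_card_nsmul _ _ 1 fun v _ => hterm v).trans ?_)
        simp [Fintype.card_piFinset]
    _ ≤ 1 := inv_mul_le_one_of_le₀ (by push_cast; rfl) (by positivity)

theorem SchwartzMap.norm_le_seminorm_div {E F : Type*} [NormedAddCommGroup E] [NormedSpace ℝ E]
    [NormedAddCommGroup F] [NormedSpace ℝ F] (f : SchwartzMap E F) (k n : ℕ) {x : E} {R s : ℝ}
    (hR : 0 < R) (hs : 0 < s) (hRx : R ≤ ‖x‖) (hsx : s ≤ ‖x‖) :
    ‖f x‖ ≤ SchwartzMap.seminorm ℝ (k + n) 0 f / (R ^ k * s ^ n) := by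
  rw [le_div_iff₀ (by positivity)]
  calc ‖f x‖ * (R ^ k * s ^ n) ≤ ‖f x‖ * ‖x‖ ^ (k + n) := by rw [pow_add]; gcongr
    _ ≤ SchwartzMap.seminorm ℝ (k + n) 0 f := by
      rw [mul_comm]; exact f.norm_pow_mul_le_seminorm ℝ (k + n) x

theorem summable_norm_inv_pow_int (r : ℕ) {n : ℕ} (hn : r < n) :
    Summable fun x : Fin r → ℤ => ‖x‖⁻¹ ^ n := by
  let L := Submodule.span ℤ (Set.range (Pi.basisFun ℝ (Fin r)))
  have hL := ZLattice.summable_norm_pow_inv L n (by rw [ZLattice.rank ℝ L]; simpa using hn)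
  let e : (Fin r → ℤ) → L := fun x => ⟨fun i => (x i : ℝ), by
    rw [(Pi.basisFun ℝ (Fin r)).mem_span_iff_repr_mem ℤ]
    intro i; simp⟩
  have he : Function.Injective e := fun x y h => by
    funext i
    simpa [e] using congrFun (congrArg Subtype.val h) i
  have hnorm : ∀ x, ‖(e x : Fin r → ℝ)‖ = ‖x‖ := fun x => by
    simp only [Pi.norm_def, e]
    congr 2
  refine (hL.comp_injective he).congr fun x => ?_
  simp [hnorm]

theorem summable_ite_box {r : ℕ} (Z : ℝ) (w : (Fin r → ℤ) → ℝ) :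
    Summable fun x : Fin r → ℤ => if x ≠ 0 ∧ ∀ i, |(x i : ℝ)| ≤ Z then w x else 0 := by
  refine summable_of_hasFiniteSupport ((Set.finite_Icc (fun _ => -⌈Z⌉) (fun _ => ⌈Z⌉)).subset ?_)
  intro x hx
  have hbox : ∀ i, |x i| ≤ ⌈Z⌉ := by
    by_contra h
    exact hx (if_neg fun hx' => h fun i => by exact_mod_cast (hx'.2 i).trans (Int.le_ceil Z))
  exact ⟨fun i => (abs_le.1 (hbox i)).1, fun i => (abs_le.1 (hbox i)).2⟩

theorem norm_tsum_le_box_add_tail {r : ℕ} (u v : (Fin r → ℤ) → ℂ) {Z B T : ℝ} (hT : 0 ≤ T)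
    (hu : ∀ x, ‖u x‖ ≤ 1) (hvB : ∀ x, ‖v x‖ ≤ B)
    (hvT : ∀ x, x ≠ 0 → ¬ (∀ i, |(x i : ℝ)| ≤ Z) → ‖v x‖ ≤ T * ‖x‖⁻¹ ^ (r + 1)) :
    ‖∑' x, if x ≠ 0 then u x * v x else 0‖ ≤
      B * (∑' x, if x ≠ 0 ∧ ∀ i, |(x i : ℝ)| ≤ Z then ‖u x‖ else 0) +
        T * ∑' x : Fin r → ℤ, ‖x‖⁻¹ ^ (r + 1) := by
  set box := fun x : Fin r → ℤ => if x ≠ 0 ∧ ∀ i, |(x i : ℝ)| ≤ Z then ‖u x‖ else 0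
  have hbox : Summable fun x => B * box x := (summable_ite_box Z fun x => ‖u x‖).mul_left B
  have hlat : Summable fun x : Fin r → ℤ => T * ‖x‖⁻¹ ^ (r + 1) :=
    (summable_norm_inv_pow_int r (Nat.lt_add_one r)).mul_left T
  have hsum := hbox.add hlat
  have hpt : ∀ x, ‖if x ≠ 0 then u x * v x else 0‖ ≤ B * box x + T * ‖x‖⁻¹ ^ (r + 1) := by
    intro x
    by_cases hx : x = 0
    · simp [box, hx]
    by_cases hZ : ∀ i, |(x i : ℝ)| ≤ Z
    · simp only [box, if_pos hx, if_pos (And.intro hx hZ), norm_mul]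
      linarith [mul_le_mul_of_nonneg_left (hvB x) (norm_nonneg (u x)),
        show 0 ≤ T * ‖x‖⁻¹ ^ (r + 1) by positivity]
    · simp only [box, if_pos hx, if_neg (fun h : x ≠ 0 ∧ _ => hZ h.2), mul_zero, zero_add,
        norm_mul]
      calc ‖u x‖ * ‖v x‖ ≤ 1 * ‖v x‖ := by gcongr; exact hu x
        _ ≤ T * ‖x‖⁻¹ ^ (r + 1) := by rw [one_mul]; exact hvT x hx hZ
  have hnorm := hsum.of_nonneg_of_le (fun _ => norm_nonneg _) hpt
  calc ‖∑' x, if x ≠ 0 then u x * v x else 0‖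
      ≤ ∑' x, ‖if x ≠ 0 then u x * v x else 0‖ := norm_tsum_le_tsum_norm hnorm
    _ ≤ ∑' x, (B * box x + T * ‖x‖⁻¹ ^ (r + 1)) := hnorm.tsum_le_tsum hpt hsum
    _ = B * ∑' x, box x + T * ∑' x : Fin r → ℤ, ‖x‖⁻¹ ^ (r + 1) := by
        rw [hbox.tsum_add hlat, tsum_mul_left, tsum_mul_left]

theorem mul_abs_le_norm_toLp {r : ℕ} (x : Fin r → ℤ) {a : ℝ} (ha : 0 ≤ a) (i : Fin r) :
    a * |(x i : ℝ)| ≤ ‖(WithLp.toLp 2 (fun i => (x i : ℝ) * a) : EuclideanSpace ℝ (Fin r))‖ := by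
  simpa [abs_mul, abs_of_nonneg ha, mul_comm] using
    PiLp.norm_apply_le (WithLp.toLp 2 (fun i => (x i : ℝ) * a) : EuclideanSpace ℝ (Fin r)) i

theorem mul_norm_le_norm_toLp {r : ℕ} (x : Fin r → ℤ) {a : ℝ} (ha : 0 < a) :
    a * ‖x‖ ≤ ‖(WithLp.toLp 2 (fun i => (x i : ℝ) * a) : EuclideanSpace ℝ (Fin r))‖ := by
  rw [← le_div_iff₀' ha, pi_norm_le_iff_of_nonneg (by positivity)]
  intro i
  rw [le_div_iff₀' ha, ← Int.norm_cast_real, Real.norm_eq_abs]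
  exact mul_abs_le_norm_toLp x ha.le i

/-- The error term `E(X, q)`. -/
noncomputable def errorTerm (r : ℕ) (d : ℝ) (Ψ : ℕ → (Fin r → ℤ) → ℂ)
    (φ : SchwartzMap (EuclideanSpace ℝ (Fin r)) ℂ) (X : ℝ) (q : ℕ) : ℂ :=
  ((X ^ ((r : ℝ) / d) : ℝ) : ℂ) *
    ∑' x : Fin r → ℤ,
      (if x ≠ 0 then
        fourierZ r q (Ψ q) x *
          FourierTransform.fourier (⇑φ : EuclideanSpace ℝ (Fin r) → ℂ)
            (WithLp.toLp 2 (fun i => (x i : ℝ) * X ^ (1 / d) / q) : EuclideanSpace ℝ (Fin r))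
      else 0)

noncomputable def boxSum (r : ℕ) (Ψ : ℕ → (Fin r → ℤ) → ℂ) (Z : ℝ) (q : ℕ) : ℝ :=
  ∑' x : Fin r → ℤ, if x ≠ 0 ∧ ∀ i, |(x i : ℝ)| ≤ Z then ‖fourierZ r q (Ψ q) x‖ else 0

theorem boxSum_nonneg (r : ℕ) (Ψ : ℕ → (Fin r → ℤ) → ℂ) (Z : ℝ) (q : ℕ) : 0 ≤ boxSum r Ψ Z q :=
  tsum_nonneg fun x => by split_ifs <;> positivity

theorem norm_errorTerm_le {r : ℕ} {d : ℝ} {Ψ : ℕ → (Fin r → ℤ) → ℂ}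
    (φ : SchwartzMap (EuclideanSpace ℝ (Fin r)) ℂ) {X N η : ℝ} {q : ℕ}
    (hΨ : ∀ x, ‖Ψ q x‖ ≤ 1) (hX : 0 < X) (hq : q ≠ 0) (hqN : (q : ℝ) ≤ 2 * N) (k : ℕ) :
    ‖errorTerm r d Ψ φ X q‖ ≤
      SchwartzMap.seminorm ℝ 0 0 (𝓕 φ) *
          (X ^ ((r : ℝ) / d) * boxSum r Ψ (2 * N * X ^ (η - 1 / d)) q) +
        SchwartzMap.seminorm ℝ (k + (r + 1)) 0 (𝓕 φ) * (∑' x : Fin r → ℤ, ‖x‖⁻¹ ^ (r + 1)) *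
          (X ^ ((r : ℝ) / d) / ((X ^ η) ^ k * (X ^ (1 / d) / q) ^ (r + 1))) := by
  set a := X ^ (1 / d) / q with ha_def
  have ha : 0 < a := by positivity
  have hXη : X ^ η ≤ 2 * N * X ^ (η - 1 / d) * a := by
    have : 2 * N * X ^ (η - 1 / d) * a = 2 * N / q * X ^ η := by
      rw [Real.rpow_sub hX, ha_def]; field_simp
    rw [this]
    exact le_mul_of_one_le_left (by positivity) ((one_le_div (by positivity)).2 hqN)
  have hbound := norm_tsum_le_box_add_tail (Z := 2 * N * X ^ (η - 1 / d))
    (fourierZ r q (Ψ q)) (fun x => 𝓕 φ (WithLp.toLp 2 (fun i => (x i : ℝ) * a)))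
    (T := SchwartzMap.seminorm ℝ (k + (r + 1)) 0 (𝓕 φ) / ((X ^ η) ^ k * a ^ (r + 1)))
    (by positivity) (norm_fourierZ_le_one hΨ) (fun x => (𝓕 φ).norm_le_seminorm ℝ _) ?tail
  case tail =>
    intro x hx hZ
    obtain ⟨i, hi⟩ := not_forall.1 hZ
    rw [not_le] at hi
    calc ‖𝓕 φ (WithLp.toLp 2 (fun i => (x i : ℝ) * a))‖
        ≤ SchwartzMap.seminorm ℝ (k + (r + 1)) 0 (𝓕 φ) / ((X ^ η) ^ k * (a * ‖x‖) ^ (r + 1)) :=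
          (𝓕 φ).norm_le_seminorm_div k (r + 1) (by positivity) (by positivity)
            (hXη.trans ((mul_le_mul_of_nonneg_right hi.le ha.le).trans
              (by rw [mul_comm]; exact mul_abs_le_norm_toLp x ha.le i)))
            (mul_norm_le_norm_toLp x ha)
      _ = _ := by rw [mul_pow, inv_pow]; field_simp
  simp only [errorTerm, ← SchwartzMap.fourier_coe, mul_div_assoc]
  rw [norm_mul, Complex.norm_real, Real.norm_of_nonneg (by positivity)]
  refine (mul_le_mul_of_nonneg_left hbound (by positivity)).trans_eq ?_
  rw [boxSum]
  field_simp

theorem natCast_le_two_mul_two_pow_log (q : ℕ) : (q : ℝ) ≤ 2 * 2 ^ Nat.log 2 q := by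
  have := Nat.lt_pow_succ_log_self one_lt_two q
  rw [pow_succ] at this
  exact_mod_cast (by omega : q ≤ 2 * 2 ^ Nat.log 2 q)

theorem sum_le_of_dyadic_block_le (P : ℕ → Prop) [DecidablePred P] (hP : ∀ q, P q → q ≠ 0)
    (f : ℝ → ℕ → ℝ) (hf : ∀ N q, 0 ≤ f N q) {T B : ℝ} (hT : 1 ≤ T)
    (hB : ∀ N : ℝ, 1 ≤ N → N ≤ T →
      ∑ q ∈ (Finset.range (⌊2 * N⌋₊ + 1)).filter (fun q => P q ∧ N ≤ (q : ℝ) ∧ (q : ℝ) ≤ 2 * N),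
        f N q ≤ B) :
    ∑ q ∈ (Finset.range ⌈T⌉₊).filter (fun q => P q ∧ (q : ℝ) < T), f (2 ^ Nat.log 2 q) q ≤
      (Nat.log 2 ⌊T⌋₊ + 1) * B := by
  set Q := (Finset.range ⌈T⌉₊).filter (fun q => P q ∧ (q : ℝ) < T)
  have hmaps : ∀ q ∈ Q, Nat.log 2 q ∈ Finset.range (Nat.log 2 ⌊T⌋₊ + 1) := fun q hq =>
    Finset.mem_range_succ_iff.2 (Nat.log_mono_right (Nat.le_floor (Finset.mem_filter.1 hq).2.2.le))
  rw [← Finset.sum_fiberwise_of_maps_to hmaps]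
  calc ∑ j ∈ Finset.range (Nat.log 2 ⌊T⌋₊ + 1), ∑ q ∈ Q with Nat.log 2 q = j, f (2 ^ Nat.log 2 q) q
      ≤ ∑ _j ∈ Finset.range (Nat.log 2 ⌊T⌋₊ + 1), B := Finset.sum_le_sum fun j hj => ?_
    _ = (Nat.log 2 ⌊T⌋₊ + 1) * B := by simp
  have h2j : (2 : ℝ) ^ j ≤ T := calc
    (2 : ℝ) ^ j ≤ 2 ^ Nat.log 2 ⌊T⌋₊ :=
      pow_le_pow_right₀ one_le_two (Finset.mem_range_succ_iff.1 hj)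
    _ ≤ ⌊T⌋₊ := by exact_mod_cast Nat.pow_log_le_self 2 (Nat.floor_pos.2 hT).ne'
    _ ≤ T := Nat.floor_le (by linarith)
  refine le_trans ?_ (hB _ (one_le_pow₀ one_le_two) h2j)
  rw [Finset.sum_congr rfl fun q hq => by rw [(Finset.mem_filter.1 hq).2]]
  refine Finset.sum_le_sum_of_subset_of_nonneg (fun q hq => ?_) fun _ _ _ => hf _ _
  obtain ⟨hqQ, rfl⟩ := Finset.mem_filter.1 hq
  have hPq := (Finset.mem_filter.1 hqQ).2.1
  have hlow : (2 : ℝ) ^ Nat.log 2 q ≤ q := by exact_mod_cast Nat.pow_log_le_self 2 (hP q hPq)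
  have hhigh := natCast_le_two_mul_two_pow_log q
  exact Finset.mem_filter.2
    ⟨Finset.mem_range_succ_iff.2 (Nat.le_floor hhigh), hPq, hlow, hhigh⟩

theorem natLog_floor_rpow_add_one_le {X α ε : ℝ} (hX : 1 ≤ X) (hα : 0 ≤ α) (hε : 0 < ε) :
    (Nat.log 2 ⌊X ^ α⌋₊ + 1 : ℝ) ≤ (1 + α / (ε * Real.log 2)) * X ^ ε := by
  have hlog2 : 0 < Real.log 2 := Real.log_pos one_lt_two
  have hXε : 1 ≤ X ^ ε := Real.one_le_rpow hX hε.le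
  have hfloor : (0 : ℝ) < ⌊X ^ α⌋₊ := by
    exact_mod_cast Nat.floor_pos.2 (Real.one_le_rpow hX hα)
  have hlog : (Nat.log 2 ⌊X ^ α⌋₊ : ℝ) ≤ α / (ε * Real.log 2) * X ^ ε := calc
    (Nat.log 2 ⌊X ^ α⌋₊ : ℝ) ≤ Real.logb 2 ⌊X ^ α⌋₊ := by exact_mod_cast Real.natLog_le_logb _ 2
    _ ≤ Real.logb 2 (X ^ α) :=
      Real.logb_le_logb_of_le one_lt_two hfloor (Nat.floor_le (by positivity))
    _ = α * Real.log X / Real.log 2 := by rw [Real.logb, Real.log_rpow (by linarith)]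
    _ ≤ α * (X ^ ε / ε) / Real.log 2 := by gcongr; exact Real.log_le_rpow_div (by linarith) hε
    _ = α / (ε * Real.log 2) * X ^ ε := by field_simp
  nlinarith

theorem sum_dyadic_le_rpow (P : ℕ → Prop) [DecidablePred P] (hP : ∀ q, P q → q ≠ 0)
    (f : ℝ → ℕ → ℝ) (hf : ∀ N q, 0 ≤ f N q) {X α c ε C : ℝ} (hX : 1 ≤ X) (hα : 0 ≤ α)
    (hε : 0 < ε)
    (hB : ∀ N : ℝ, 1 ≤ N → N ≤ X ^ α →
      ∑ q ∈ (Finset.range (⌊2 * N⌋₊ + 1)).filter (fun q => P q ∧ N ≤ (q : ℝ) ∧ (q : ℝ) ≤ 2 * N),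
        f N q ≤ C * X ^ c) :
    ∑ q ∈ (Finset.range ⌈X ^ α⌉₊).filter (fun q => P q ∧ (q : ℝ) < X ^ α), f (2 ^ Nat.log 2 q) q ≤
      (1 + α / (ε * Real.log 2)) * |C| * X ^ (c + ε) := calc
  _ ≤ (Nat.log 2 ⌊X ^ α⌋₊ + 1) * (C * X ^ c) :=
    sum_le_of_dyadic_block_le P hP f hf (Real.one_le_rpow hX hα) hB
  _ ≤ (Nat.log 2 ⌊X ^ α⌋₊ + 1) * (|C| * X ^ c) := by gcongr; exact le_abs_self C
  _ ≤ (1 + α / (ε * Real.log 2)) * X ^ ε * (|C| * X ^ c) := by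
    gcongr; exact natLog_floor_rpow_add_one_le hX hα hε
  _ = (1 + α / (ε * Real.log 2)) * |C| * X ^ (c + ε) := by
    rw [Real.rpow_add (by linarith)]; ring

theorem sum_rpow_div_le {X α β η d : ℝ} (hX : 1 ≤ X) (hα : 0 ≤ α) (k n : ℕ) (P : ℕ → Prop)
    [DecidablePred P] :
    ∑ q ∈ (Finset.range ⌈X ^ α⌉₊).filter P, X ^ β / ((X ^ η) ^ k * (X ^ (1 / d) / q) ^ n) ≤
      2 * X ^ (α + β + (α - 1 / d) * n - η * k) := by
  have hX0 : 0 < X := by linarith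
  have hT : 1 ≤ X ^ α := Real.one_le_rpow hX hα
  have hterm : ∀ q ∈ (Finset.range ⌈X ^ α⌉₊).filter P,
      X ^ β / ((X ^ η) ^ k * (X ^ (1 / d) / q) ^ n) ≤ X ^ (β + (α - 1 / d) * n - η * k) := by
    intro q hq
    have hqT : (q : ℝ) ≤ X ^ α := (Nat.lt_ceil.1 (Finset.mem_range.1 (Finset.mem_filter.1 hq).1)).le
    calc X ^ β / ((X ^ η) ^ k * (X ^ (1 / d) / q) ^ n)
        = X ^ β * (q / X ^ (1 / d)) ^ n / (X ^ η) ^ k := by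
          rw [← inv_div (q : ℝ), inv_pow]; field_simp
      _ ≤ X ^ β * (X ^ α / X ^ (1 / d)) ^ n / (X ^ η) ^ k := by gcongr
      _ = X ^ (β + (α - 1 / d) * n - η * k) := by
          rw [← Real.rpow_sub hX0, ← Real.rpow_natCast, ← Real.rpow_natCast, ← Real.rpow_mul hX0.le,
            ← Real.rpow_mul hX0.le, ← Real.rpow_add hX0, ← Real.rpow_sub hX0]
  have hcard : (((Finset.range ⌈X ^ α⌉₊).filter P).card : ℝ) ≤ 2 * X ^ α := calc
    (((Finset.range ⌈X ^ α⌉₊).filter P).card : ℝ) ≤ ⌈X ^ α⌉₊ := by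
      exact_mod_cast (Finset.card_filter_le _ _).trans (Finset.card_range _).le
    _ ≤ 2 * X ^ α := by linarith [Nat.ceil_lt_add_one (by linarith : (0 : ℝ) ≤ X ^ α)]
  calc _ ≤ ((Finset.range ⌈X ^ α⌉₊).filter P).card • X ^ (β + (α - 1 / d) * n - η * k) :=
        Finset.sum_le_card_nsmul _ _ _ hterm
    _ ≤ 2 * X ^ α * X ^ (β + (α - 1 / d) * n - η * k) := by
        rw [nsmul_eq_mul]; gcongr
    _ = 2 * X ^ (α + β + (α - 1 / d) * n - η * k) := by
        rw [mul_assoc, ← Real.rpow_add hX0]; ring_nf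

theorem level_of_distribution_of_box_bound_general
    (r : ℕ) (d : ℝ)
    (Ψ : ℕ → (Fin r → ℤ) → ℂ)
    (hΨ1 : ∀ q : ℕ, Squarefree q → ∀ x, ‖Ψ q x‖ ≤ 1)
    (φ : SchwartzMap (EuclideanSpace ℝ (Fin r)) ℂ)
    (α c η C₁ : ℝ) (hα : 0 < α) (hc : c < (r : ℝ) / d) (hη : 0 < η)
    (hyp : ∀ X : ℝ, 2 ≤ X → ∀ N : ℝ, 1 ≤ N → N ≤ X ^ α →
      X ^ ((r : ℝ) / d) *
          ∑ q ∈ (Finset.range (⌊2 * N⌋₊ + 1)).filter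
              (fun q : ℕ => Squarefree q ∧ N ≤ (q : ℝ) ∧ (q : ℝ) ≤ 2 * N),
            ∑' x : Fin r → ℤ,
              (if x ≠ 0 ∧ ∀ i, |(x i : ℝ)| ≤ 2 * N * X ^ (η - 1 / d) then
                ‖fourierZ r q (Ψ q) x‖
              else 0)
        ≤ C₁ * X ^ c) :
    ∃ c' : ℝ, c' < (r : ℝ) / d ∧ ∃ C₂ : ℝ, ∀ X : ℝ, 2 ≤ X →
      ∑ q ∈ (Finset.range ⌈X ^ α⌉₊).filter
          (fun q : ℕ => Squarefree q ∧ (q : ℝ) < X ^ α),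
        ‖((X ^ ((r : ℝ) / d) : ℝ) : ℂ) *
          ∑' x : Fin r → ℤ,
            (if x ≠ 0 then
              fourierZ r q (Ψ q) x *
                FourierTransform.fourier (⇑φ : EuclideanSpace ℝ (Fin r) → ℂ)
                  (WithLp.toLp 2 (fun i => (x i : ℝ) * X ^ (1 / d) / q) : EuclideanSpace ℝ (Fin r))
            else 0)‖
        ≤ C₂ * X ^ c' := by
  set c' := (c + r / d) / 2 with hc'
  obtain ⟨k, hk⟩ : ∃ k : ℕ, α + r / d + (α - 1 / d) * (r + 1 : ℕ) - c' ≤ η * k :=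
    ⟨_, (div_le_iff₀' hη).1 (Nat.le_ceil ((α + r / d + (α - 1 / d) * (r + 1 : ℕ) - c') / η))⟩
  set C₀ := SchwartzMap.seminorm ℝ 0 0 (𝓕 φ)
  set Cₖ := SchwartzMap.seminorm ℝ (k + (r + 1)) 0 (𝓕 φ) * ∑' x : Fin r → ℤ, ‖x‖⁻¹ ^ (r + 1)
  have hCₖ : 0 ≤ Cₖ := mul_nonneg (apply_nonneg _ _) (tsum_nonneg fun _ => by positivity)
  set A := (1 + α / ((c' - c) * Real.log 2)) * |C₁|
  refine ⟨c', by linarith, C₀ * A + Cₖ * 2, fun X hX => ?_⟩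
  have hX1 : 1 ≤ X := by linarith
  have hbox := sum_dyadic_le_rpow Squarefree (fun q hq => hq.ne_zero)
    (fun N q => X ^ ((r : ℝ) / d) * boxSum r Ψ (2 * N * X ^ (η - 1 / d)) q)
    (fun N q => mul_nonneg (by positivity) (boxSum_nonneg r Ψ _ q)) hX1 hα.le
    (sub_pos.2 (by linarith : c < c')) fun N hN hNT => by
      rw [← Finset.mul_sum]; exact hyp X hX N hN hNT
  have htail := sum_rpow_div_le (β := (r : ℝ) / d) (η := η) (d := d) hX1 hα.le k (r + 1)
    fun q => Squarefree q ∧ (q : ℝ) < X ^ α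
  rw [add_sub_cancel] at hbox
  show ∑ q ∈ _, ‖errorTerm r d Ψ φ X q‖ ≤ _
  refine (Finset.sum_le_sum fun q hq =>
    have hsf := (Finset.mem_filter.1 hq).2.1
    norm_errorTerm_le φ (η := η) (hΨ1 q hsf) (by linarith) hsf.ne_zero
      (natCast_le_two_mul_two_pow_log q) k).trans ?_
  rw [Finset.sum_add_distrib, ← Finset.mul_sum (a := C₀), ← Finset.mul_sum (a := Cₖ)]
  calc _ ≤ C₀ * (A * X ^ c') + Cₖ * (2 * X ^ c') :=
        add_le_add (mul_le_mul_of_nonneg_left hbox (apply_nonneg _ _))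
          (mul_le_mul_of_nonneg_left (htail.trans (by gcongr; linarith)) hCₖ)
    _ = (C₀ * A + Cₖ * 2) * X ^ c' := by ring

/-- Level of distribution, simplified version: a bound on sums of `|Ψ̂_q(x)|` over boxes
and dyadic ranges of squarefree `q` implies a level of distribution `α`. -/
theorem level_of_distribution_of_box_bound
    (r : ℕ) (hr : 1 ≤ r) (d : ℝ) (hd : 0 < d)
    (Ψ : ℕ → (Fin r → ℤ) → ℂ)
    (hΨ1 : ∀ q : ℕ, Squarefree q → ∀ x, ‖Ψ q x‖ ≤ 1)
    (hΨfac : ∀ q : ℕ, Squarefree q → ∀ x y : Fin r → ℤ,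
      (∀ i, (q : ℤ) ∣ x i - y i) → Ψ q x = Ψ q y)
    (φ : SchwartzMap (EuclideanSpace ℝ (Fin r)) ℂ)
    (α c η C₁ : ℝ) (hα : 0 < α) (hc : c < (r : ℝ) / d) (hη : 0 < η)
    (hyp : ∀ X : ℝ, 2 ≤ X → ∀ N : ℝ, 1 ≤ N → N ≤ X ^ α →
      X ^ ((r : ℝ) / d) *
          ∑ q ∈ (Finset.range (⌊2 * N⌋₊ + 1)).filter
              (fun q : ℕ => Squarefree q ∧ N ≤ (q : ℝ) ∧ (q : ℝ) ≤ 2 * N),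
            ∑' x : Fin r → ℤ,
              (if x ≠ 0 ∧ ∀ i, |(x i : ℝ)| ≤ 2 * N * X ^ (η - 1 / d) then
                ‖fourierZ r q (Ψ q) x‖
              else 0)
        ≤ C₁ * X ^ c) :
    ∃ c' : ℝ, c' < (r : ℝ) / d ∧ ∃ C₂ : ℝ, ∀ X : ℝ, 2 ≤ X →
      ∑ q ∈ (Finset.range ⌈X ^ α⌉₊).filter
          (fun q : ℕ => Squarefree q ∧ (q : ℝ) < X ^ α),
        ‖((X ^ ((r : ℝ) / d) : ℝ) : ℂ) *
          ∑' x : Fin r → ℤ,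
            (if x ≠ 0 then
              fourierZ r q (Ψ q) x *
                FourierTransform.fourier (⇑φ : EuclideanSpace ℝ (Fin r) → ℂ)
                  (WithLp.toLp 2 (fun i => (x i : ℝ) * X ^ (1 / d) / q) : EuclideanSpace ℝ (Fin r))
            else 0)‖
        ≤ C₂ * X ^ c' :=
  level_of_distribution_of_box_bound_general r d Ψ hΨ1 φ α c η C₁ hα hc hη hyp
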